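/- arXiv:1110.4034 — 5 statements merged into one kernel-verified Lean document; each statement's English description precedes it below -/
import Mathlib

section
/- Let T be a topological space, X a regular closed subset of T, and S a connected component of cl(T \ X). If cl(T \ X) has finitely many connected components, then the boundary of S is contained in X. -/
open Set

lemma comp_closed {T : Type*} [TopologicalSpace T] {A : Set T} (hA : IsClosed A)
    {x : T} (hx : x ∈ A) : IsClosed (connectedComponentIn A x) := by
  rw [connectedComponentIn_eq_image hx]
  exact hA.isClosedEmbedding_subtypeVal.isClosedMap _ isClosed_connectedComponent

theorem stmt_3 {T : Type*} [TopologicalSpace T] (X : Set T)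
    (hX : X = closure (interior X))
    (hfin : {S : Set T | ∃ x ∈ closure Xᶜ, S = connectedComponentIn (closure Xᶜ) x}.Finite)
    (S : Set T) (hS : ∃ x ∈ closure Xᶜ, S = connectedComponentIn (closure Xᶜ) x) :
    frontier S ⊆ X := by
  set A := closure Xᶜ with hA
  have hAc : IsClosed A := isClosed_closure
  have hXc : IsClosed X := hX ▸ isClosed_closure
  obtain ⟨x, hx, rfl⟩ := hS
  set S := connectedComponentIn A x with hSdef
  have hScl : IsClosed S := comp_closed hAc hx
  -- A \ S is closed: finite union of other components
  have hdiff : A \ S = ⋃₀ ({S' | ∃ y ∈ A, S' = connectedComponentIn A y} \ {S}) := by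
    ext z
    constructor
    · rintro ⟨hzA, hzS⟩
      refine ⟨connectedComponentIn A z, ⟨⟨z, hzA, rfl⟩, ?_⟩, mem_connectedComponentIn hzA⟩
      intro h
      exact hzS (h ▸ mem_connectedComponentIn hzA)
    · rintro ⟨S', ⟨⟨y, hy, rfl⟩, hne⟩, hz⟩
      refine ⟨connectedComponentIn_subset A y hz, fun hzS => ?_⟩
      exact hne ((connectedComponentIn_eq hz).trans (connectedComponentIn_eq hzS).symm)
  have hclosed : IsClosed (A \ S) := by
    rw [hdiff]
    rw [sUnion_eq_biUnion]
    refine (hfin.subset diff_subset).isClosed_biUnion ?_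
    rintro S' ⟨⟨y, hy, rfl⟩, -⟩
    exact comp_closed hAc hy
  -- S is open in A via U = (A \ S)ᶜ
  intro p hp
  by_contra hpX
  have hpS : p ∈ S := hScl.closure_eq ▸ hp.1
  have hpint : p ∈ interior S := by
    refine mem_interior.2 ⟨Xᶜ ∩ (A \ S)ᶜ, fun q hq => ?_, (hXc.isOpen_compl.inter hclosed.isOpen_compl), ⟨hpX, fun h => h.2 hpS⟩⟩
    have hqA : q ∈ A := subset_closure hq.1
    by_contra hqS
    exact hq.2 ⟨hqA, hqS⟩
  exact hp.2 hpint
end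

section
/- Let T be a locally connected topological space, X a regular closed subset of T, and S a connected component of cl(T \ X). Then the boundary of S is contained in X. -/
theorem stmt_4 {T : Type*} [TopologicalSpace T] [LocallyConnectedSpace T] (X : Set T)
    (hX : X = closure (interior X))
    (S : Set T) (hS : ∃ x ∈ closure Xᶜ, S = connectedComponentIn (closure Xᶜ) x) :
    frontier S ⊆ X := by
  obtain ⟨x, hx, rfl⟩ := hS
  intro p hp
  by_contra hpX
  have hXclosed : IsClosed X := hX ▸ isClosed_closure
  have hXc : Xᶜ ∈ nhds p := hXclosed.isOpen_compl.mem_nhds hpX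
  obtain ⟨U, hUsub, hUopen, hpU, hUconn⟩ :=
    locallyConnectedSpace_iff_subsets_isOpen_isConnected.mp ‹_› p Xᶜ hXc
  have hpcl : p ∈ closure (connectedComponentIn (closure Xᶜ) x) := hp.1
  obtain ⟨q, hqU, hqS⟩ := mem_closure_iff.mp hpcl U hUopen hpU
  have hUsub' : U ⊆ closure Xᶜ := hUsub.trans subset_closure
  have hUS : U ⊆ connectedComponentIn (closure Xᶜ) q :=
    hUconn.isPreconnected.subset_connectedComponentIn hqU hUsub'
  have heq : connectedComponentIn (closure Xᶜ) q = connectedComponentIn (closure Xᶜ) x := by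
    exact (connectedComponentIn_eq hqS).symm
  rw [heq] at hUS
  exact hp.2 (mem_interior.mpr ⟨U, hUS, hUopen, hpU⟩)
end

section
/- Let T be a connected, unicoherent topological space and X a nonempty connected regular closed subset of T. Then every connected component of cl(T \ X) has a connected boundary. -/
open Set

/-- Kuratowski-style lemma: if `S` is preconnected nonempty, `N` open disjoint
from `S` with `closure N ⊆ S ∪ N`, then `S ∪ N` is preconnected. -/
lemma kur_aux {T : Type*} [TopologicalSpace T] [ConnectedSpace T] {S N : Set T}
    (hS : IsPreconnected S) (hSne : S.Nonempty) (hNo : IsOpen N)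
    (hclN : closure N ⊆ S ∪ N) (hdisj : S ∩ N = ∅) :
    IsPreconnected (S ∪ N) := by
  have key : ∀ u v : Set T, IsOpen u → IsOpen v → S ∪ N ⊆ u ∪ v →
      ((S ∪ N) ∩ v).Nonempty → (S ∪ N) ∩ (u ∩ v) = ∅ → S ⊆ u → False := by
    intro u v hu hv hsub hnev hempty hSu
    set E := (S ∪ N) ∩ v with hE
    have hSv : S ∩ v = ∅ := by
      apply eq_empty_of_subset_empty
      intro y hy
      exact absurd (⟨Or.inl hy.1, hSu hy.1, hy.2⟩ : y ∈ (S ∪ N) ∩ (u ∩ v)) (Set.eq_empty_iff_forall_notMem.mp hempty _)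
    have hEN : E = N ∩ v := by
      ext y
      constructor
      · rintro ⟨hy1 | hy1, hy2⟩
        · exact absurd (⟨hy1, hy2⟩ : y ∈ S ∩ v) (Set.eq_empty_iff_forall_notMem.mp hSv _)
        · exact ⟨hy1, hy2⟩
      · rintro ⟨hy1, hy2⟩; exact ⟨Or.inr hy1, hy2⟩
    have hEopen : IsOpen E := hEN ▸ hNo.inter hv
    have hEclosed : IsClosed E := by
      rw [← closure_eq_iff_isClosed]
      apply Subset.antisymm _ subset_closure
      intro y hy
      have hySN : y ∈ S ∪ N := by
        have : closure E ⊆ closure N := closure_mono (hEN ▸ inter_subset_left)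
        exact hclN (this hy)
      have hyu : y ∉ u := by
        intro hyu
        obtain ⟨z, hz⟩ := mem_closure_iff.mp hy u hu hyu
        exact absurd (⟨hz.2.1, hz.1, hz.2.2⟩ : z ∈ (S ∪ N) ∩ (u ∩ v)) (Set.eq_empty_iff_forall_notMem.mp hempty _)
      rcases hsub hySN with h | h
      · exact absurd h hyu
      · exact ⟨hySN, h⟩
    rcases isClopen_iff.mp ⟨hEclosed, hEopen⟩ with h | h
    · rw [h] at hnev; exact hnev.ne_empty rfl
    · obtain ⟨a, ha⟩ := hSne
      have haE : a ∈ E := h ▸ mem_univ a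
      exact absurd (⟨Or.inl ha, hSu ha, haE.2⟩ : a ∈ (S ∪ N) ∩ (u ∩ v)) (Set.eq_empty_iff_forall_notMem.mp hempty _)
  intro u v hu hv hsub hneu hnev
  by_contra hcon
  rw [not_nonempty_iff_eq_empty] at hcon
  have hcon' : (S ∪ N) ∩ (u ∩ v) = ∅ := hcon
  have hScase : S ⊆ u ∨ S ⊆ v := by
    rcases (S ∩ u).eq_empty_or_nonempty with h | h
    · right; intro y hy
      rcases hsub (Or.inl hy) with h' | h'
      · exact absurd (⟨hy, h'⟩ : y ∈ S ∩ u) (Set.eq_empty_iff_forall_notMem.mp h _)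
      · exact h'
    · rcases (S ∩ v).eq_empty_or_nonempty with h' | h'
      · left; intro y hy
        rcases hsub (Or.inl hy) with h'' | h''
        · exact h''
        · exact absurd (⟨hy, h''⟩ : y ∈ S ∩ v) (Set.eq_empty_iff_forall_notMem.mp h' _)
      · obtain ⟨z, hz⟩ := hS u v hu hv (fun y hy => hsub (Or.inl hy)) h h'
        exact absurd (⟨Or.inl hz.1, hz.2⟩ : z ∈ (S ∪ N) ∩ (u ∩ v)) (Set.eq_empty_iff_forall_notMem.mp hcon' _)
  rcases hScase with h | h
  · exact absurd (key u v hu hv hsub hnev hcon' h) not_false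
  · have hsub' : S ∪ N ⊆ v ∪ u := by
      intro y hy; rcases hsub hy with h' | h'
      exacts [Or.inr h', Or.inl h']
    have hcon'' : (S ∪ N) ∩ (v ∩ u) = ∅ := by rw [inter_comm v u]; exact hcon'
    exact absurd (key v u hv hu hsub' hneu hcon'' h) not_false

theorem stmt_5 {T : Type*} [TopologicalSpace T] [ConnectedSpace T]
    (huni : ∀ X₁ X₂ : Set T, IsClosed X₁ → IsClosed X₂ →
      IsPreconnected X₁ → IsPreconnected X₂ → X₁ ∪ X₂ = Set.univ →
      IsPreconnected (X₁ ∩ X₂))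
    (X : Set T) (hX : X = closure (interior X)) (hne : X.Nonempty)
    (hconn : IsConnected X)
    (S : Set T) (hS : ∃ x ∈ closure Xᶜ, S = connectedComponentIn (closure Xᶜ) x) :
    IsPreconnected (frontier S) := by
  obtain ⟨x, hxF, rfl⟩ := hS
  set F := closure Xᶜ with hF
  set S := connectedComponentIn F x with hSdef
  have hFclosed : IsClosed F := isClosed_closure
  have hFi : F = (interior X)ᶜ := closure_compl
  have hxS : x ∈ S := mem_connectedComponentIn hxF
  have hSpre : IsPreconnected S := isPreconnected_connectedComponentIn
  have hSsub : S ⊆ F := connectedComponentIn_subset _ _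
  have hSclosed : IsClosed S := by
    have h1 : closure S ⊆ S :=
      hSpre.closure.subset_connectedComponentIn (subset_closure hxS)
        (closure_minimal hSsub hFclosed)
    exact isClosed_of_closure_subset h1
  -- X ⊆ closure Sᶜ
  have hintX : interior X ⊆ Sᶜ := by
    intro y hy hyS
    exact (hFi ▸ hSsub hyS) hy
  have hXZ : X ⊆ closure Sᶜ := by
    rw [hX]; exact closure_mono hintX
  -- key step : closure Sᶜ is preconnected
  have hZ : IsPreconnected (closure Sᶜ) := by
    set Z := closure Sᶜ with hZdef
    have key : ∀ u v : Set T, IsOpen u → IsOpen v → Z ⊆ u ∪ v →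
        Z ∩ (u ∩ v) = ∅ → (Z ∩ v).Nonempty → X ∩ v = ∅ → False := by
      intro u v hu hv hsub hempty hnev hXv
      set N := Sᶜ ∩ v with hNdef
      have hNne : N.Nonempty := by
        rcases N.eq_empty_or_nonempty with h | h
        · exfalso
          have hsv : Sᶜ ⊆ vᶜ := by
            intro y hy hyv
            exact absurd (⟨hy, hyv⟩ : y ∈ N) (Set.eq_empty_iff_forall_notMem.mp h _)
          have : Z ⊆ vᶜ := closure_minimal hsv (isClosed_compl_iff.mpr hv)
          obtain ⟨z, hz⟩ := hnev
          exact this hz.1 hz.2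
        · exact h
      have hNZ : N ⊆ Z ∩ v := fun y hy => ⟨subset_closure hy.1, hy.2⟩
      have hQclosed : IsClosed (Z ∩ v) := by
        have : Z ∩ v = Z ∩ uᶜ := by
          ext y; constructor
          · rintro ⟨h1, h2⟩
            refine ⟨h1, fun hyu => ?_⟩
            exact absurd (⟨h1, hyu, h2⟩ : y ∈ Z ∩ (u ∩ v)) (Set.eq_empty_iff_forall_notMem.mp hempty _)
          · rintro ⟨h1, h2⟩
            rcases hsub h1 with h | h
            · exact absurd h h2
            · exact ⟨h1, h⟩
        rw [this]
        exact isClosed_closure.inter (isClosed_compl_iff.mpr hu)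
      have hclN : closure N ⊆ S ∪ N := by
        intro y hy
        by_cases hyS : y ∈ S
        · exact Or.inl hyS
        · have hyQ : y ∈ Z ∩ v := closure_minimal hNZ hQclosed hy
          exact Or.inr ⟨hyS, hyQ.2⟩
      have hdisj : S ∩ N = ∅ := by
        ext y; simp only [mem_inter_iff, mem_empty_iff_false, iff_false]
        rintro ⟨h1, h2, _⟩; exact h2 h1
      have hNopen : IsOpen N := hSclosed.isOpen_compl.inter hv
      have hSNpre : IsPreconnected (S ∪ N) :=
        kur_aux hSpre ⟨x, hxS⟩ hNopen hclN hdisj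
      have hSNsub : S ∪ N ⊆ F := by
        rintro y (hy | hy)
        · exact hSsub hy
        · rw [hFi]
          intro hyint
          have hyX : y ∈ X := interior_subset hyint
          exact absurd (⟨hyX, hy.2⟩ : y ∈ X ∩ v) (Set.eq_empty_iff_forall_notMem.mp hXv _)
      have : S ∪ N ⊆ S :=
        hSNpre.subset_connectedComponentIn (Or.inl hxS) hSNsub
      obtain ⟨n, hn⟩ := hNne
      exact hn.1 (this (Or.inr hn))
    intro u v hu hv hsub hneu hnev
    by_contra hcon
    rw [not_nonempty_iff_eq_empty] at hcon
    have hcon' : Z ∩ (u ∩ v) = ∅ := hcon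
    have hXuv : ∀ y, y ∉ X ∩ (u ∩ v) := fun y hy =>
      Set.eq_empty_iff_forall_notMem.mp hcon' y ⟨hXZ hy.1, hy.2⟩
    have hXcase : X ∩ v = ∅ ∨ X ∩ u = ∅ := by
      rcases (X ∩ u).eq_empty_or_nonempty with h | h
      · right; exact h
      rcases (X ∩ v).eq_empty_or_nonempty with h' | h'
      · left; exact h'
      obtain ⟨z, hz⟩ := hconn.2 u v hu hv (fun y hy => hsub (hXZ hy)) h h'
      exact absurd (hz : z ∈ X ∩ (u ∩ v)) (hXuv z)
    rcases hXcase with h | h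
    · exact absurd (key u v hu hv hsub hcon' hnev h) not_false
    · have hsub' : Z ⊆ v ∪ u := by
        intro y hy; rcases hsub hy with h' | h'
        exacts [Or.inr h', Or.inl h']
      have hcon'' : Z ∩ (v ∩ u) = ∅ := by rw [inter_comm v u]; exact hcon'
      exact absurd (key v u hv hu hsub' hcon'' hneu h) not_false
  have hunion : closure S ∪ closure Sᶜ = univ := by
    apply eq_univ_of_forall
    intro y
    by_cases h : y ∈ S
    · exact Or.inl (subset_closure h)
    · exact Or.inr (subset_closure h)
  have := huni (closure S) (closure Sᶜ) isClosed_closure isClosed_closure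
    hSpre.closure hZ hunion
  rwa [frontier_eq_closure_inter_closure]
end

section
/- Let F and G be disjoint closed subsets of ℝ² such that both ℝ² \ F and ℝ² \ G are connected. Then ℝ² \ (F ∪ G) is connected. -/
/-!
Put `U = Fᶜ` and `V = Gᶜ`, connected open sets covering the plane. If `U ∩ V = (F ∪ G)ᶜ` splits
into disjoint open pieces `A` and `B`, take an Urysohn function `φ` with `φ = 0` on `F` and
`φ = 1` on `G`. The map to `ℝ / 2ℤ` given by `φ` off `B` and `-φ` on `B` is continuous, since `B`
only borders on `F ∪ G`, where `φ ≡ -φ` mod 2; by simple connectivity it lifts to a continuous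
real function `r`. Measured against `-φ` on `B`, the lift differs from the glued function by a
`2ℤ`-valued function continuous on `U` (the boundary of `B` inside `U` lies in `F`, where `φ = 0`);
measured against `2 - φ` on `B`, by one continuous on `V` (the boundary lies in `G`, where
`φ = 1`). Both are constant, and comparing them at a point of `A` and a point of `B` gives `0 = 2`.
-/

open Set

variable {X : Type*} [TopologicalSpace X]

theorem ContinuousMap.exists_lift_addCircle [SimplyConnectedSpace X]
    [LocallyPathConnectedSpace X] {p : ℝ} (f : C(X, AddCircle p)) :
    ∃ r : C(X, ℝ), ∀ x, (r x : AddCircle p) = f x := by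
  obtain ⟨x₀⟩ := (inferInstance : Nonempty X)
  obtain ⟨r₀, hr₀⟩ := QuotientAddGroup.mk_surjective (f x₀)
  obtain ⟨r, ⟨-, hr⟩, -⟩ :=
    (AddCircle.isCoveringMap_coe p).existsUnique_continuousMap_lifts f x₀ r₀ hr₀
  exact ⟨r, congrFun hr⟩

theorem IsPreconnected.sub_eq_sub_of_coe_eq {p : ℝ} {s : Set X} (hs : IsPreconnected s)
    {g h : X → ℝ} (hg : ContinuousOn g s) (hh : ContinuousOn h s)
    (hgh : ∀ x ∈ s, (g x : AddCircle p) = h x) {a b : X} (ha : a ∈ s) (hb : b ∈ s) :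
    g a - h a = g b - h b :=
  hs.constant_of_mapsTo (T := (AddSubgroup.zmultiples p : Set ℝ))
    (isDiscrete_iff_discreteTopology.mpr
      (inferInstanceAs (DiscreteTopology (AddSubgroup.zmultiples p))))
    (hg.sub hh) (fun x hx ↦ QuotientAddGroup.eq_iff_sub_mem.mp (hgh x hx)) ha hb

theorem frontier_inter_subset_compl {W u v : Set X} (hW : IsOpen W) (hu : IsOpen u)
    (hv : IsOpen v) (hWuv : W ⊆ u ∪ v) (huv : W ∩ (u ∩ v) = ∅) :
    frontier (W ∩ v) ⊆ Wᶜ := by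
  rintro x hx hxW
  rw [(hW.inter hv).frontier_eq] at hx
  have hxu : x ∈ u := (hWuv hxW).resolve_right fun hxv ↦ hx.2 ⟨hxW, hxv⟩
  obtain ⟨y, hyu, hyW, hyv⟩ := mem_closure_iff.mp hx.1 u hu hxu
  exact huv.subset ⟨hyW, hyu, hyv⟩

theorem IsPreconnected.inter_of_union_eq_univ [NormalSpace X] [SimplyConnectedSpace X]
    [LocallyPathConnectedSpace X] {U V : Set X} (hUo : IsOpen U) (hVo : IsOpen V)
    (hU : IsPreconnected U) (hV : IsPreconnected V) (hUV : U ∪ V = univ) :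
    IsPreconnected (U ∩ V) := by
  classical
  intro u v hu hv hcov ⟨a, ⟨haU, haV⟩, hau⟩ ⟨b, ⟨hbU, hbV⟩, hbv⟩
  by_contra huv
  rw [not_nonempty_iff_eq_empty] at huv
  set B := U ∩ V ∩ v
  have hB : frontier B ⊆ (U ∩ V)ᶜ :=
    frontier_inter_subset_compl (hUo.inter hVo) hu hv hcov huv
  have haB : a ∉ B := fun ha ↦ huv.subset ⟨⟨haU, haV⟩, hau, ha.2⟩
  have hbB : b ∈ B := ⟨⟨hbU, hbV⟩, hbv⟩
  obtain ⟨φ, hφV, hφU, -⟩ := exists_continuous_zero_one_of_isClosed hVo.isClosed_compl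
    hUo.isClosed_compl (by rwa [disjoint_compl_left_iff_subset, compl_subset_iff_union])
  set σ := B.piecewise (fun x ↦ -φ x) φ
  set σ' := B.piecewise (fun x ↦ 2 - φ x) φ
  have hσ : ContinuousOn σ U := by
    refine ContinuousOn.piecewise (fun x ⟨hxU, hx⟩ ↦ ?_) (by fun_prop) (by fun_prop)
    have hxV : x ∈ Vᶜ := fun hxV ↦ hB hx ⟨hxU, hxV⟩
    simp [hφV hxV]
  have hσ' : ContinuousOn σ' V := by
    refine ContinuousOn.piecewise (fun x ⟨hxV, hx⟩ ↦ ?_) (by fun_prop) (by fun_prop)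
    have hxU : x ∈ Uᶜ := fun hxU ↦ hB hx ⟨hxU, hxV⟩
    norm_num [hφU hxU]
  have hσσ' : ∀ x, (σ x : AddCircle (2 : ℝ)) = σ' x := by
    intro x
    by_cases hx : x ∈ B
    · simp only [σ, σ', piecewise_eq_of_mem _ _ _ hx, QuotientAddGroup.eq_iff_sub_mem]
      exact ⟨-1, by simp only [neg_smul, one_smul]; ring⟩
    · simp only [σ, σ', piecewise_eq_of_notMem _ _ _ hx]
  have hf : Continuous fun x ↦ (σ x : AddCircle (2 : ℝ)) := by
    rw [← continuousOn_univ, ← hUV]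
    refine ContinuousOn.union_of_isOpen ?_ ?_ hUo hVo
    · exact continuous_quotient_mk'.comp_continuousOn hσ
    · simp only [hσσ']
      exact continuous_quotient_mk'.comp_continuousOn hσ'
  obtain ⟨r, hr⟩ := ContinuousMap.exists_lift_addCircle ⟨_, hf⟩
  have h₁ := hU.sub_eq_sub_of_coe_eq r.continuous.continuousOn hσ (fun x _ ↦ hr x) haU hbU
  have h₂ := hV.sub_eq_sub_of_coe_eq r.continuous.continuousOn hσ'
    (fun x _ ↦ (hr x).trans (hσσ' x)) haV hbV
  simp only [σ, σ', piecewise_eq_of_mem _ _ _ hbB, piecewise_eq_of_notMem _ _ _ haB] at h₁ h₂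
  linarith

theorem IsConnected.inter_of_union_eq_univ [NormalSpace X] [SimplyConnectedSpace X]
    [LocallyPathConnectedSpace X] {U V : Set X} (hUo : IsOpen U) (hVo : IsOpen V)
    (hU : IsConnected U) (hV : IsConnected V) (hUV : U ∪ V = univ) :
    IsConnected (U ∩ V) := by
  refine ⟨?_, hU.isPreconnected.inter_of_union_eq_univ hUo hVo hV.isPreconnected hUV⟩
  simpa using isPreconnected_univ U V hUo hVo hUV.ge (by simpa using hU.nonempty)
    (by simpa using hV.nonempty)

theorem stmt_8 (F G : Set (EuclideanSpace ℝ (Fin 2)))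
    (hF : IsClosed F) (hG : IsClosed G) (hdisj : Disjoint F G)
    (hFc : IsConnected Fᶜ) (hGc : IsConnected Gᶜ) :
    IsConnected (F ∪ G)ᶜ := by
  rw [compl_union]
  exact hFc.inter_of_union_eq_univ hF.isOpen_compl hG.isOpen_compl hGc
    (by rw [← compl_inter, hdisj.inter_eq, compl_empty])
end

section
/- There do not exist three nonempty regular closed subsets r₁, r₂, r₃ of ℝ such that: each rᵢ has connected interior, the interiors of rᵢ and rⱼ are disjoint for i ≠ j (i.e., rᵢ · rⱼ = 0 in the regular closed algebra), and each union rᵢ ∪ rⱼ (i ≠ j) has connected interior. -/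
lemma stmt_14_key {U₁ U₂ U₃ V : Set ℝ} (hV : V.OrdConnected)
    (h1 : U₁ ⊆ V) (h2 : U₂ ⊆ V) (h3 : U₃ ∩ V = ∅)
    {x₁ x₂ x₃ : ℝ} (m1 : x₁ ∈ U₁) (m2 : x₂ ∈ U₂) (m3 : x₃ ∈ U₃)
    (hle : x₁ ≤ x₃) (hle' : x₃ ≤ x₂) : False := by
  have hv : x₃ ∈ V := hV.out (h1 m1) (h2 m2) ⟨hle, hle'⟩
  have : x₃ ∈ U₃ ∩ V := ⟨m3, hv⟩
  rw [h3] at this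
  exact this

theorem stmt_14 :
    ¬ ∃ r₁ r₂ r₃ : Set ℝ,
      (r₁ = closure (interior r₁)) ∧ (r₂ = closure (interior r₂)) ∧
      (r₃ = closure (interior r₃)) ∧
      r₁.Nonempty ∧ r₂.Nonempty ∧ r₃.Nonempty ∧
      IsConnected (interior r₁) ∧ IsConnected (interior r₂) ∧
      IsConnected (interior r₃) ∧
      interior (r₁ ∩ r₂) = ∅ ∧ interior (r₁ ∩ r₃) = ∅ ∧ interior (r₂ ∩ r₃) = ∅ ∧
      IsConnected (interior (r₁ ∪ r₂)) ∧ IsConnected (interior (r₁ ∪ r₃)) ∧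
      IsConnected (interior (r₂ ∪ r₃)) := by
  rintro ⟨r₁, r₂, r₃, h1, h2, h3, n1, n2, n3, c1, c2, c3, d12, d13, d23, u12, u13, u23⟩
  set U₁ := interior r₁ with hU1
  set U₂ := interior r₂ with hU2
  set U₃ := interior r₃ with hU3
  -- pairwise disjointness of the interiors
  have disj12 : U₁ ∩ U₂ = ∅ := by rw [hU1, hU2, ← interior_inter]; exact d12
  have disj13 : U₁ ∩ U₃ = ∅ := by rw [hU1, hU3, ← interior_inter]; exact d13
  have disj23 : U₂ ∩ U₃ = ∅ := by rw [hU2, hU3, ← interior_inter]; exact d23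
  -- each V_{ij} = interior (rᵢ ∪ rⱼ) contains Uᵢ and Uⱼ
  have sub : ∀ r s : Set ℝ, interior r ⊆ interior (r ∪ s) :=
    fun r s => interior_mono Set.subset_union_left
  have sub' : ∀ r s : Set ℝ, interior s ⊆ interior (r ∪ s) :=
    fun r s => interior_mono Set.subset_union_right
  -- V_{ij} is disjoint from Uₖ
  have key : ∀ (ra rb : Set ℝ) (Uc : Set ℝ), IsOpen Uc →
      Uc ∩ interior ra = ∅ → Uc ∩ interior rb = ∅ →
      ra = closure (interior ra) → rb = closure (interior rb) →
      Uc ∩ interior (ra ∪ rb) = ∅ := by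
    intro ra rb Uc hUc hca hcb hra hrb
    have h1 : interior (ra ∪ rb) ⊆ closure (interior ra ∪ interior rb) := by
      refine interior_subset.trans ?_
      rw [closure_union]
      exact Set.union_subset_union hra.subset hrb.subset
    have h2 : Uc ∩ (interior ra ∪ interior rb) = ∅ := by
      rw [Set.inter_union_distrib_left, hca, hcb, Set.union_empty]
    have h3 : Uc ∩ closure (interior ra ∪ interior rb) ⊆ ∅ := by
      refine (hUc.inter_closure).trans ?_
      rw [h2, closure_empty]
    rw [← Set.subset_empty_iff]
    exact (Set.inter_subset_inter_right Uc h1).trans h3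
  have o1 : IsOpen U₁ := isOpen_interior
  have o2 : IsOpen U₂ := isOpen_interior
  have o3 : IsOpen U₃ := isOpen_interior
  have k3 : U₃ ∩ interior (r₁ ∪ r₂) = ∅ := by
    apply key r₁ r₂ U₃ o3 _ _ h1 h2
    · rw [← hU1, Set.inter_comm]; exact disj13
    · rw [← hU2, Set.inter_comm]; exact disj23
  have k2 : U₂ ∩ interior (r₁ ∪ r₃) = ∅ := by
    apply key r₁ r₃ U₂ o2 _ _ h1 h3
    · rw [← hU1, Set.inter_comm]; exact disj12
    · rw [← hU3]; exact disj23
  have k1 : U₁ ∩ interior (r₂ ∪ r₃) = ∅ := by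
    apply key r₂ r₃ U₁ o1 _ _ h2 h3
    · rw [← hU2]; exact disj12
    · rw [← hU3]; exact disj13
  -- connected open sets in ℝ are order-convex
  have oc12 : (interior (r₁ ∪ r₂)).OrdConnected := u12.isPreconnected.ordConnected
  have oc13 : (interior (r₁ ∪ r₃)).OrdConnected := u13.isPreconnected.ordConnected
  have oc23 : (interior (r₂ ∪ r₃)).OrdConnected := u23.isPreconnected.ordConnected
  -- pick points
  obtain ⟨x₁, m1⟩ := c1.nonempty
  obtain ⟨x₂, m2⟩ := c2.nonempty
  obtain ⟨x₃, m3⟩ := c3.nonempty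
  rcases le_total x₁ x₂ with hab | hab <;> rcases le_total x₂ x₃ with hbc | hbc <;>
    rcases le_total x₁ x₃ with hac | hac
  · exact stmt_14_key oc13 (sub r₁ r₃) (sub' r₁ r₃) k2 m1 m3 m2 hab hbc
  · exact stmt_14_key oc13 (sub r₁ r₃) (sub' r₁ r₃) k2 m1 m3 m2 hab hbc
  · exact stmt_14_key oc12 (sub r₁ r₂) (sub' r₁ r₂) k3 m1 m2 m3 hac hbc
  · exact stmt_14_key oc23 (sub' r₂ r₃) (sub r₂ r₃) k1 m3 m2 m1 hac hab
  · exact stmt_14_key oc23 (sub r₂ r₃) (sub' r₂ r₃) k1 m2 m3 m1 hab hac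
  · exact stmt_14_key oc12 (sub' r₁ r₂) (sub r₁ r₂) k3 m2 m1 m3 hbc hac
  · exact stmt_14_key oc13 (sub' r₁ r₃) (sub r₁ r₃) k2 m3 m1 m2 hbc hab
  · exact stmt_14_key oc13 (sub' r₁ r₃) (sub r₁ r₃) k2 m3 m1 m2 hbc hab
end
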